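/- arXiv:2111.00671 — 7 statements merged into one kernel-verified Lean document; each statement's English description precedes it below -/
import Mathlib

section
/- For every natural number n > 1, the integer complexity satisfies 3·log₃(n) ≤ ‖n‖ ≤ 3·log₂(n), where ‖n‖ is the least number of 1's needed to write n using additions and multiplications. -/
/-- `CanWrite n k`: `n` can be written using exactly `k` ones with `+` and `*`. -/
inductive CanWrite : ℕ → ℕ → Prop
  | one : CanWrite 1 1
  | add {a b j k : ℕ} : CanWrite a j → CanWrite b k → CanWrite (a + b) (j + k)
  | mul {a b j k : ℕ} : CanWrite a j → CanWrite b k → CanWrite (a * b) (j + k)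

/-- Integer complexity: least number of ones needed to write `n`. -/
noncomputable def cpx (n : ℕ) : ℕ := sInf {k | CanWrite n k}

/-- The defect `δ(n) = ‖n‖ − 3·log₃ n`. -/
noncomputable def defect (n : ℕ) : ℝ := (cpx n : ℝ) - 3 * Real.logb 3 n

/-- `n` is stable if `‖3^k n‖ = 3k + ‖n‖` for all `k`. -/
def Stable (n : ℕ) : Prop := ∀ k : ℕ, cpx (3 ^ k * n) = 3 * k + cpx n

/-- Stable complexity `‖n‖_st = min_{k≥0} (‖3^k n‖ − 3k)`. -/
noncomputable def cpxSt (n : ℕ) : ℕ := sInf {m | ∃ k : ℕ, cpx (3 ^ k * n) = m + 3 * k}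

/-- Stable defect `δ_st(n) = ‖n‖_st − 3·log₃ n`. -/
noncomputable def defectSt (n : ℕ) : ℝ := (cpxSt n : ℝ) - 3 * Real.logb 3 n

/-- Key arithmetic lemma for the addition case of the cube bound. -/
lemma add_cube_bound {a b j k : ℕ} (ha : 1 ≤ a) (hb : 1 ≤ b) (hj : 1 ≤ j) (hk : 1 ≤ k)
    (ha3 : a ^ 3 ≤ 3 ^ j) (hb3 : b ^ 3 ≤ 3 ^ k) : (a + b) ^ 3 ≤ 3 ^ (j + k) := by
  have h3j : 3 ≤ 3 ^ j := by calc 3 = 3 ^ 1 := rfl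
                                 _ ≤ 3 ^ j := Nat.pow_le_pow_right (by norm_num) hj
  have h3k : 3 ≤ 3 ^ k := by calc 3 = 3 ^ 1 := rfl
                                 _ ≤ 3 ^ k := Nat.pow_le_pow_right (by norm_num) hk
  rw [pow_add]
  -- helper for the case a = 1
  have one_case : ∀ b k : ℕ, 1 ≤ b → 1 ≤ k → b ^ 3 ≤ 3 ^ k → (1 + b) ^ 3 ≤ 3 * 3 ^ k := by
    intro b k hb hk hb3
    have h3k : 3 ≤ 3 ^ k := by calc 3 = 3 ^ 1 := rfl
                                   _ ≤ 3 ^ k := Nat.pow_le_pow_right (by norm_num) hk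
    rcases Nat.lt_or_ge b 3 with hb' | hb'
    · interval_cases b
      · omega
      · -- b = 2: 8 ≤ 3 ^ k forces k ≥ 2
        have hk2 : 2 ≤ k := by
          by_contra h
          interval_cases k <;> omega
        have : 9 ≤ 3 ^ k := by calc 9 = 3 ^ 2 := rfl
                                   _ ≤ 3 ^ k := Nat.pow_le_pow_right (by norm_num) hk2
        omega
    · -- b ≥ 3 : (1+b)^3 ≤ 3 * b^3
      have h1 : 3 * b ^ 2 ≤ b * b ^ 2 := Nat.mul_le_mul_right _ hb'
      have h2 : 3 * b ≤ b * b := Nat.mul_le_mul_right _ hb'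
      have : (1 + b) ^ 3 ≤ 3 * b ^ 3 := by nlinarith [h1, h2]
      calc (1 + b) ^ 3 ≤ 3 * b ^ 3 := this
        _ ≤ 3 * 3 ^ k := by omega
  rcases Nat.lt_or_ge a 2 with ha' | ha'
  · -- a = 1
    have ha1 : a = 1 := by omega
    subst ha1
    calc (1 + b) ^ 3 ≤ 3 * 3 ^ k := one_case b k hb hk hb3
      _ ≤ 3 ^ j * 3 ^ k := Nat.mul_le_mul_right _ h3j
  · rcases Nat.lt_or_ge b 2 with hb' | hb'
    · -- b = 1
      have hb1 : b = 1 := by omega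
      subst hb1
      calc (a + 1) ^ 3 = (1 + a) ^ 3 := by ring
        _ ≤ 3 * 3 ^ j := one_case a j ha hj ha3
        _ = 3 ^ j * 3 := by ring
        _ ≤ 3 ^ j * 3 ^ k := Nat.mul_le_mul_left _ h3k
    · -- a, b ≥ 2 : a + b ≤ a * b
      have hab : a + b ≤ a * b := by nlinarith
      calc (a + b) ^ 3 ≤ (a * b) ^ 3 := Nat.pow_le_pow_left hab 3
        _ = a ^ 3 * b ^ 3 := by ring
        _ ≤ 3 ^ j * 3 ^ k := Nat.mul_le_mul ha3 hb3

/-- Basic facts from a writing: positivity and the cube bound `n³ ≤ 3^k`. -/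
lemma canWrite_facts {n k : ℕ} (h : CanWrite n k) : 1 ≤ n ∧ 1 ≤ k ∧ n ^ 3 ≤ 3 ^ k := by
  induction h with
  | one => norm_num
  | add ha hb iha ihb =>
      obtain ⟨h1, h2, h3⟩ := iha
      obtain ⟨h4, h5, h6⟩ := ihb
      exact ⟨by omega, by omega, add_cube_bound h1 h4 h2 h5 h3 h6⟩
  | mul ha hb iha ihb =>
      obtain ⟨h1, h2, h3⟩ := iha
      obtain ⟨h4, h5, h6⟩ := ihb
      refine ⟨Nat.one_le_iff_ne_zero.2 (by positivity), by omega, ?_⟩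
      calc (_ * _) ^ 3 = _ ^ 3 * _ ^ 3 := by ring
        _ ≤ 3 ^ _ * 3 ^ _ := Nat.mul_le_mul h3 h6
        _ = 3 ^ (_ + _) := (pow_add 3 _ _).symm

/-- Binary-expansion upper bound: every `n ≥ 2` can be written with `≤ 3·log₂ n` ones. -/
lemma exists_canWrite (n : ℕ) (hn : 2 ≤ n) : ∃ k, CanWrite n k ∧ k ≤ 3 * Nat.log 2 n := by
  induction n using Nat.strong_induction_on with
  | _ n ih =>
    have hlog1 : 1 ≤ Nat.log 2 n := Nat.one_le_iff_ne_zero.2 (by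
      simpa using (Nat.log_pos (by norm_num) hn).ne')
    rcases Nat.lt_or_ge n 4 with h4 | h4
    · interval_cases n
      · exact ⟨2, CanWrite.add CanWrite.one CanWrite.one, by omega⟩
      · exact ⟨3, CanWrite.add (CanWrite.add CanWrite.one CanWrite.one) CanWrite.one, by omega⟩
    · -- n ≥ 4: n = 2*m + r with m = n/2 ≥ 2
      set m := n / 2 with hm
      have hm2 : 2 ≤ m := by omega
      have hmn : m < n := by omega
      obtain ⟨k, hk, hkle⟩ := ih m hmn hm2
      have hlog : Nat.log 2 m + 1 ≤ Nat.log 2 n := by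
        have h0 := Nat.log_div_base 2 n
        rw [← hm] at h0
        omega
      have h2m : CanWrite (2 * m) (2 + k) :=
        CanWrite.mul (CanWrite.add CanWrite.one CanWrite.one) hk
      rcases Nat.even_or_odd n with he | ho
      · have hne : n = 2 * m := by
          obtain ⟨c, hc⟩ := he; omega
        exact ⟨2 + k, hne ▸ h2m, by omega⟩
      · have hne : n = 2 * m + 1 := by
          obtain ⟨c, hc⟩ := ho; omega
        exact ⟨2 + k + 1, hne ▸ CanWrite.add h2m CanWrite.one, by omega⟩

theorem complexity_bounds (n : ℕ) (hn : 1 < n) :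
    3 * Real.logb 3 n ≤ (cpx n : ℝ) ∧ (cpx n : ℝ) ≤ 3 * Real.logb 2 n := by
  obtain ⟨k₀, hk₀, hk₀le⟩ := exists_canWrite n hn
  have hne : {k | CanWrite n k}.Nonempty := ⟨k₀, hk₀⟩
  have hmem : CanWrite n (cpx n) := Nat.sInf_mem hne
  have hcube : n ^ 3 ≤ 3 ^ cpx n := (canWrite_facts hmem).2.2
  have hn0 : (0:ℝ) < n := by positivity
  constructor
  · -- lower bound
    have hcubeR : ((n : ℝ)) ^ 3 ≤ 3 ^ cpx n := by exact_mod_cast hcube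
    have hlog := Real.logb_le_logb_of_le (b := 3) (by norm_num)
      (by positivity) hcubeR
    rw [Real.logb_pow, Real.logb_pow, Real.logb_self_eq_one (by norm_num)] at hlog
    push_cast at hlog
    linarith
  · -- upper bound
    have h1 : (cpx n : ℝ) ≤ (3 * Nat.log 2 n : ℕ) := by
      exact_mod_cast Nat.sInf_le hk₀ |>.trans hk₀le
    have h2 : (Nat.log 2 n : ℝ) ≤ Real.logb 2 n := Real.natLog_le_logb n 2
    push_cast at h1
    linarith
end

section
/- If m and n are positive integers with δ(n) − δ(m) rational, then n = m·3^k for some integer k, and consequently δ(n) − δ(m) is an integer. -/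
/-! Since complexities are integers, `δ(n) - δ(m)` is rational exactly when
`log₃ n - log₃ m = a / d` is. Clearing denominators gives `n ^ d * 3 ^ c = m ^ d * 3 ^ b` with
`b - c = a`, so `n` and `m` have the same part prime to `3`: `n / m` is a power `3 ^ k`, and then
`δ(n) - δ(m) = ‖n‖ - ‖m‖ - 3k` is an integer. -/

open Real

namespace Nat

theorem ordCompl_pow (p n d : ℕ) : ordCompl[p] (n ^ d) = ordCompl[p] n ^ d := by
  induction d with
  | zero => simp
  | succ d ih => rw [pow_succ, ordCompl_mul, ih, pow_succ]

theorem ordCompl_eq_of_pow_mul_pow_eq {p m n d b c : ℕ} (hp : p.Prime) (hd : d ≠ 0)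
    (h : n ^ d * p ^ b = m ^ d * p ^ c) : ordCompl[p] n = ordCompl[p] m := by
  have h' := congrArg (ordCompl[p] ·) h
  simp only [ordCompl_mul, ordCompl_pow, ordCompl_self_pow hp, mul_one] at h'
  exact Nat.pow_left_injective hd h'

theorem mul_ordProj_eq_of_ordCompl_eq {p m n : ℕ} (h : ordCompl[p] n = ordCompl[p] m) :
    n * ordProj[p] m = m * ordProj[p] n :=
  calc n * ordProj[p] m = ordProj[p] n * ordCompl[p] n * ordProj[p] m := by
        rw [ordProj_mul_ordCompl_eq_self]
    _ = ordProj[p] n * (ordProj[p] m * ordCompl[p] m) := by rw [h]; ring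
    _ = m * ordProj[p] n := by rw [ordProj_mul_ordCompl_eq_self]; ring

end Nat

theorem pow_mul_pow_eq_of_logb_sub_eq_ratCast {b m n : ℕ} (hb : 1 < b) (hm : 0 < m) (hn : 0 < n)
    {r : ℚ} (h : logb b n - logb b m = r) :
    n ^ r.den * b ^ (-r.num).toNat = m ^ r.den * b ^ r.num.toNat := by
  have hb' : (1 : ℝ) < b := by exact_mod_cast hb
  have hlogb (x : ℕ) (hx : 0 < x) (k : ℕ) :
      logb b ((x ^ r.den * b ^ k : ℕ) : ℝ) = r.den * logb b x + k := by
    push_cast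
    rw [logb_mul (by positivity) (by positivity), logb_pow, logb_pow, logb_self_eq_one hb', mul_one]
  have hnum : (r.num.toNat : ℝ) - (-r.num).toNat = r.num := by
    exact_mod_cast congrArg (Int.cast : ℤ → ℝ) r.num.toNat_sub_toNat_neg
  have hden : (r : ℝ) * r.den = r.num := by exact_mod_cast r.mul_den_eq_num
  refine Nat.cast_injective (R := ℝ) (logb_injOn_pos hb' (Set.mem_Ioi.mpr (by positivity))
    (Set.mem_Ioi.mpr (by positivity)) ?_)
  rw [hlogb n hn, hlogb m hm]
  linear_combination (r.den : ℝ) * h + hden - hnum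

theorem exists_eq_mul_zpow_of_logb_sub_eq_ratCast {p m n : ℕ} (hp : p.Prime) (hm : 0 < m)
    (hn : 0 < n) {r : ℚ} (h : logb p n - logb p m = r) : ∃ k : ℤ, (n : ℝ) = m * p ^ k := by
  have hcompl := Nat.ordCompl_eq_of_pow_mul_pow_eq hp r.den_nz
    (pow_mul_pow_eq_of_logb_sub_eq_ratCast hp.one_lt hm hn h)
  have hproj : (n : ℝ) * p ^ m.factorization p = m * p ^ n.factorization p := by
    exact_mod_cast Nat.mul_ordProj_eq_of_ordCompl_eq hcompl
  refine ⟨n.factorization p - m.factorization p, ?_⟩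
  have hp0 : (p : ℝ) ≠ 0 := by exact_mod_cast hp.ne_zero
  rw [zpow_sub₀ hp0, zpow_natCast, zpow_natCast, ← mul_div_assoc, eq_div_iff (by positivity)]
  linear_combination hproj

theorem logb_mul_self_zpow {b x : ℝ} (hb : 1 < b) (hx : x ≠ 0) (k : ℤ) :
    logb b (x * b ^ k) = logb b x + k := by
  rw [logb_mul hx (by positivity), ← rpow_intCast, logb_rpow (by positivity) hb.ne']

theorem defect_diff_rational (m n : ℕ) (hm : 0 < m) (hn : 0 < n)
    (h : ∃ q : ℚ, defect n - defect m = (q : ℝ)) :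
    (∃ k : ℤ, (n : ℝ) = (m : ℝ) * 3 ^ k) ∧ ∃ j : ℤ, defect n - defect m = (j : ℝ) := by
  obtain ⟨q, hq⟩ := h
  have hdefect : defect n - defect m = cpx n - cpx m - 3 * (logb 3 n - logb 3 m) := by
    unfold defect; ring
  have hlog : logb (3 : ℕ) n - logb (3 : ℕ) m = (((cpx n - cpx m - q) / 3 : ℚ) : ℝ) := by
    push_cast; linarith
  obtain ⟨k, hk⟩ := exists_eq_mul_zpow_of_logb_sub_eq_ratCast Nat.prime_three hm hn hlog
  push_cast at hk
  have hlogk : logb 3 n - logb 3 m = k := by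
    rw [hk, logb_mul_self_zpow (by norm_num) (by positivity)]; ring
  exact ⟨⟨k, hk⟩, cpx n - cpx m - 3 * k, by rw [hdefect, hlogk]; push_cast; ring⟩
end

section
/- If m and n are positive integers with δ(n) = δ(m), then ‖n‖ ≡ ‖m‖ (mod 3). -/
/-!
If `‖n‖ - 3 log₃ n = ‖m‖ - 3 log₃ m`, then `3 ^ (‖n‖ - ‖m‖) = (n / m) ^ 3` in `ℚ`. Comparing
`3`-adic valuations gives `‖n‖ - ‖m‖ = 3 (v₃ n - v₃ m)`.
-/

open Real

theorem zpow_sub_eq_div_pow_of_sub_mul_logb_eq {b x y : ℝ} (hb₀ : 0 < b) (hb₁ : b ≠ 1)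
    (hx : 0 < x) (hy : 0 < y) {s t : ℤ} (k : ℕ)
    (h : (s : ℝ) - k * logb b x = t - k * logb b y) :
    b ^ (s - t) = (x / y) ^ k := by
  have hexp : ((s - t : ℤ) : ℝ) = logb b ((x / y) ^ k) := by
    rw [logb_pow, logb_div hx.ne' hy.ne']
    push_cast
    linarith
  rw [← rpow_intCast, hexp, rpow_logb hb₀ hb₁ (by positivity)]

theorem dvd_of_prime_zpow_eq_pow {p : ℕ} [Fact p.Prime] {q : ℚ} {z : ℤ} {k : ℕ}
    (h : (p : ℚ) ^ z = q ^ k) : (k : ℤ) ∣ z := by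
  have hval := congrArg (padicValRat p) h
  rw [padicValRat.zpow, padicValRat.pow, padicValRat.self (Fact.out : p.Prime).one_lt,
    mul_one] at hval
  exact ⟨_, hval⟩

theorem defect_eq_cpx_mod_three (m n : ℕ) (hm : 0 < m) (hn : 0 < n)
    (h : defect n = defect m) : cpx n ≡ cpx m [MOD 3] := by
  have hreal : (3 : ℝ) ^ ((cpx n : ℤ) - cpx m) = ((n : ℝ) / m) ^ 3 :=
    zpow_sub_eq_div_pow_of_sub_mul_logb_eq (by norm_num) (by norm_num)
      (by exact_mod_cast hn) (by exact_mod_cast hm) 3 (by exact_mod_cast h)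
  have hrat : ((3 : ℕ) : ℚ) ^ ((cpx n : ℤ) - cpx m) = ((n : ℚ) / m) ^ 3 :=
    Rat.cast_injective (α := ℝ) (by push_cast; exact hreal)
  have hdvd := dvd_of_prime_zpow_eq_pow hrat
  rw [Nat.modEq_iff_dvd, dvd_sub_comm]
  exact_mod_cast hdvd
end

section
/- If two stable defects are congruent modulo 1 then they are equal; that is, if m and n are stable positive integers with δ(n) − δ(m) an integer, then δ(n) = δ(m). -/
lemma defect_pow_mul (m t : ℕ) (hm : 0 < m) (hms : Stable m) :
    defect (3 ^ t * m) = defect m := by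
  unfold defect
  rw [hms t]
  have hl : Real.logb 3 ((3 ^ t * m : ℕ) : ℝ) = t + Real.logb 3 m := by
    push_cast
    rw [Real.logb_mul (by positivity) (by positivity), Real.logb_pow,
      Real.logb_self_eq_one (by norm_num)]
    ring
  rw [hl]
  push_cast
  ring

lemma defect_eq_of_cube (m n : ℕ) (hm : 0 < m) (hn : 0 < n) (hms : Stable m) (s : ℕ)
    (heq : n ^ 3 = m ^ 3 * 3 ^ s) : defect n = defect m := by
  have hfac := congrArg (fun x => x.factorization 3) heq
  simp [Nat.factorization_mul (pow_ne_zero _ hm.ne') (pow_ne_zero _ (by norm_num : (3:ℕ) ≠ 0)),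
    Nat.factorization_pow, Nat.Prime.factorization (by norm_num : Nat.Prime 3)] at hfac
  obtain ⟨t, ht⟩ : ∃ t, s = 3 * t := ⟨n.factorization 3 - m.factorization 3, by omega⟩
  have hcube : n ^ 3 = (3 ^ t * m) ^ 3 := by
    rw [heq, ht, mul_pow, ← pow_mul]
    ring
  have := Nat.pow_left_injective (by norm_num : 3 ≠ 0) hcube
  rw [this]
  exact defect_pow_mul m t hm hms

theorem stable_defects_congruent_eq (m n : ℕ) (hm : 0 < m) (hn : 0 < n)
    (hms : Stable m) (hns : Stable n)
    (h : ∃ j : ℤ, defect n - defect m = (j : ℝ)) : defect n = defect m := by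
  obtain ⟨j, hj⟩ := h
  set c : ℤ := (cpx n : ℤ) - cpx m - j with hc_def
  have hc : Real.logb 3 ((n : ℝ) ^ 3 / (m : ℝ) ^ 3) = (c : ℝ) := by
    rw [Real.logb_div (by positivity) (by positivity), Real.logb_pow, Real.logb_pow]
    unfold defect at hj
    rw [hc_def]
    push_cast
    linarith
  have hpow : (3 : ℝ) ^ (c : ℝ) = (n : ℝ) ^ 3 / (m : ℝ) ^ 3 := by
    rw [← hc, Real.rpow_logb (by norm_num) (by norm_num) (by positivity)]
  rw [Real.rpow_intCast] at hpow
  rcases le_or_gt 0 c with h0 | h0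
  · lift c to ℕ using h0 with s
    rw [zpow_natCast] at hpow
    have heqR : (n : ℝ) ^ 3 = (m : ℝ) ^ 3 * 3 ^ s := by
      field_simp at hpow
      linarith
    have heqN : n ^ 3 = m ^ 3 * 3 ^ s := by exact_mod_cast heqR
    exact defect_eq_of_cube m n hm hn hms s heqN
  · have hpow' : (3 : ℝ) ^ (-c) = (m : ℝ) ^ 3 / (n : ℝ) ^ 3 := by
      rw [zpow_neg, hpow]
      field_simp
    have hs : -c = ((-c).toNat : ℤ) := (Int.toNat_of_nonneg (by omega)).symm
    rw [hs, zpow_natCast] at hpow'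
    have heqR : (m : ℝ) ^ 3 = (n : ℝ) ^ 3 * 3 ^ (-c).toNat := by
      field_simp at hpow'
      linarith
    have heqN : m ^ 3 = n ^ 3 * 3 ^ (-c).toNat := by exact_mod_cast heqR
    exact (defect_eq_of_cube n m hn hm hns _ heqN).symm
end

section
/- If N is stable, N = n₁·…·n_k, and ‖N‖ = ‖n₁‖ + … + ‖n_k‖, then each n_i is stable. -/
lemma canWrite_self : ∀ n, 0 < n → CanWrite n n := by
  intro n hn
  induction n with
  | zero => omega
  | succ m ih =>
    cases m with
    | zero => exact CanWrite.one
    | succ p => exact CanWrite.add (ih (by omega)) CanWrite.one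

lemma canWrite_cpx (n : ℕ) (hn : 0 < n) : CanWrite n (cpx n) :=
  Nat.sInf_mem ⟨n, canWrite_self n hn⟩

lemma cpx_le_of {n k : ℕ} (h : CanWrite n k) : cpx n ≤ k :=
  Nat.sInf_le h

lemma cpx_mul_le {a b : ℕ} (ha : 0 < a) (hb : 0 < b) :
    cpx (a * b) ≤ cpx a + cpx b :=
  cpx_le_of (CanWrite.mul (canWrite_cpx a ha) (canWrite_cpx b hb))

lemma cpx_three_le : cpx 3 ≤ 3 := cpx_le_of (canWrite_self 3 (by omega))

lemma cpx_pow3_mul_le (n k : ℕ) (hn : 0 < n) :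
    cpx (3 ^ k * n) ≤ 3 * k + cpx n := by
  induction k with
  | zero => simp
  | succ k ih =>
    have h1 : (3 : ℕ) ^ (k + 1) * n = 3 * (3 ^ k * n) := by ring
    rw [h1]
    have h2 : cpx (3 * (3 ^ k * n)) ≤ cpx 3 + cpx (3 ^ k * n) :=
      cpx_mul_le (by omega) (by positivity)
    have := cpx_three_le
    omega

lemma cpx_prod_le : ∀ (l : List ℕ), l ≠ [] → (∀ x ∈ l, 0 < x) →
    cpx l.prod ≤ (l.map cpx).sum := by
  intro l
  induction l with
  | nil => simp
  | cons a t ih =>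
    intro _ hl
    have ha : 0 < a := hl a (by simp)
    have ht : ∀ x ∈ t, 0 < x := fun x hx => hl x (by simp [hx])
    by_cases htnil : t = []
    · subst htnil; simp
    · have hP : 0 < t.prod := List.prod_pos ht
      have h1 : cpx (a * t.prod) ≤ cpx a + cpx t.prod := cpx_mul_le ha hP
      have h2 := ih htnil ht
      simp only [List.prod_cons, List.map_cons, List.sum_cons]
      omega

theorem stable_factors_of_stable (l : List ℕ) (hl : ∀ x ∈ l, 0 < x)
    (N : ℕ) (hN : N = l.prod) (hstab : Stable N)
    (hcpx : cpx N = (l.map cpx).sum) :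
    ∀ x ∈ l, Stable x := by
  induction l generalizing N with
  | nil => simp
  | cons a t ih =>
    have ha : 0 < a := hl a (by simp)
    have ht : ∀ x ∈ t, 0 < x := fun x hx => hl x (by simp [hx])
    by_cases htnil : t = []
    · subst htnil
      simp only [List.prod_cons, List.prod_nil, mul_one] at hN
      intro x hx
      simp at hx
      subst hx
      exact hN ▸ hstab
    · have hP : 0 < t.prod := List.prod_pos ht
      set P := t.prod with hPdef
      set S := (t.map cpx).sum with hSdef
      have hNprod : N = a * P := by simpa using hN
      have hcpx' : cpx N = cpx a + S := by simpa using hcpx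
      have hPle : cpx P ≤ S := cpx_prod_le t htnil ht
      have hNle : cpx N ≤ cpx a + cpx P := hNprod ▸ cpx_mul_le ha hP
      have hPS : cpx P = S := by omega
      have hstabA : Stable a := by
        intro k
        have hub := cpx_pow3_mul_le a k ha
        have hkey : cpx (3 ^ k * N) = 3 * k + cpx N := hstab k
        have hsplit : (3 : ℕ) ^ k * N = (3 ^ k * a) * P := by
          rw [hNprod]; ring
        have hlb : cpx (3 ^ k * N) ≤ cpx (3 ^ k * a) + cpx P := by
          rw [hsplit]; exact cpx_mul_le (by positivity) hP
        omega
      have hstabP : Stable P := by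
        intro k
        have hub := cpx_pow3_mul_le P k hP
        have hkey : cpx (3 ^ k * N) = 3 * k + cpx N := hstab k
        have hsplit : (3 : ℕ) ^ k * N = a * (3 ^ k * P) := by
          rw [hNprod]; ring
        have hlb : cpx (3 ^ k * N) ≤ cpx a + cpx (3 ^ k * P) := by
          rw [hsplit]; exact cpx_mul_le ha (by positivity)
        omega
      intro x hx
      rcases List.mem_cons.mp hx with h | h
      · exact h ▸ hstabA
      · exact ih ht P rfl hstabP hPS x h
end

section
/- Let S be a well-ordered subset of a totally ordered set X of order type α. Then the topological closure of S in X is well-ordered and has order type either α or α+1. -/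
/-!
Send each point `x` of the closure to the least element of `S` strictly above it, or to `⊤` if
there is none. A point `x` of the closure is approached by `S` from below: `S` has no point in
`(x, m)`, where `m` is the least element of `S` above `x`, so `x` cannot be a limit from above.
Hence this map is a strict embedding of `closure S` into `WithTop S`, whose order type is `α + 1`,
while `S` itself embeds into `closure S`; so the order type of the closure lies between `α` and
`α + 1`.
-/

open Set Ordinal

universe u v

theorem Ordinal.type_withTop {S : Type u} [LinearOrder S] [WellFoundedLT S] :
    typeLT (WithTop S) = typeLT S + 1 := by
  rw [(WithTop.orderIsoSumLexPUnit.toRelIsoLT.trans Sum.Lex.toLexRelIsoLT.symm).ordinalType_congr]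
  simp

theorem nonempty_orderIso_Iio_iff {A : Type u} [LinearOrder A] [WellFoundedLT A]
    (o : Ordinal.{v}) :
    Nonempty (A ≃o Iio o) ↔ lift.{v} (typeLT A) = lift.{u} o := by
  conv_rhs => rw [← type_toType o]
  rw [lift_type_eq.{u, v, 0}]
  exact ⟨fun ⟨e⟩ => ⟨(e.trans ToType.mk).toRelIsoLT⟩,
    fun ⟨f⟩ => ⟨(OrderIso.ofRelIsoLT f).trans ToType.mk.symm⟩⟩

theorem exists_orderIso_Iio_of_orderEmbedding_withTop {S A : Type u} [LinearOrder S]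
    [LinearOrder A] {α : Ordinal.{v}} (e : S ≃o Iio α) (f : S ↪o A) (g : A ↪o WithTop S) :
    ∃ β : Ordinal, (β = α ∨ β = α + 1) ∧ Nonempty (A ≃o Iio β) := by
  have : WellFoundedLT S := e.toOrderEmbedding.wellFoundedLT
  have : WellFoundedLT A := g.wellFoundedLT
  have hS : lift.{v} (typeLT S) = lift.{u} α := (nonempty_orderIso_Iio_iff α).1 ⟨e⟩
  have hSA : typeLT S ≤ typeLT A := type_le_iff'.2 ⟨f.ltEmbedding⟩
  have hAS : typeLT A ≤ typeLT S + 1 :=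
    (type_le_iff'.2 ⟨g.ltEmbedding⟩).trans_eq type_withTop
  have hA_le : lift.{v} (typeLT A) ≤ lift.{u} (α + 1) := by
    simpa [hS] using lift_le.{v}.2 hAS
  obtain ⟨β, hβ⟩ := mem_range_lift_of_le hA_le
  have hαβ : α ≤ β := by
    rw [← lift_le.{u}, hβ, ← hS, lift_le]; exact hSA
  have hβα : β ≤ α + 1 := by
    rw [← lift_le.{u}, hβ]; exact hA_le
  refine ⟨β, ?_, (nonempty_orderIso_Iio_iff β).2 hβ.symm⟩
  rcases hβα.lt_or_eq with h | h
  · exact .inl ((Order.lt_add_one_iff.1 h).antisymm hαβ)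
  · exact .inr h

section LeastAbove

variable {X : Type*} [LinearOrder X] (S : Set X) [WellFoundedLT S]

open Classical in
noncomputable def leastAbove (x : X) : WithTop S :=
  if h : ∃ s : S, x < s then ↑(wellFounded_lt.min {s : S | x < s} h) else ⊤

variable {S}

theorem leastAbove_le {x : X} {s : S} (h : x < s) : leastAbove S x ≤ s := by
  have hex : ∃ s : S, x < s := ⟨s, h⟩
  rw [leastAbove, dif_pos hex, WithTop.coe_le_coe]
  exact wellFounded_lt.min_le (s := {s : S | x < s}) h

theorem lt_of_leastAbove_eq_coe {x : X} {s : S} (h : leastAbove S x = s) : x < s := by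
  unfold leastAbove at h
  split_ifs at h with hex
  · rw [← WithTop.coe_inj.1 h]
    exact wellFounded_lt.min_mem _ hex
  · exact absurd h WithTop.top_ne_coe

variable [TopologicalSpace X] [OrderTopology X]

theorem exists_mem_Ioc_of_mem_closure {x y : X} (hx : x ∈ closure S) (hyx : y < x) :
    ∃ s ∈ S, y < s ∧ s ≤ x := by
  by_contra! h
  have hgap : ∀ s : S, y < s → leastAbove S x ≤ s := fun s hs => leastAbove_le (h s s.2 hs)
  cases hm : leastAbove S x with
  | top =>
    have hSy : S ⊆ Iic y := fun s hs => not_lt.1 fun hys =>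
      WithTop.not_top_le_coe _ (hm ▸ hgap ⟨s, hs⟩ hys)
    exact hyx.not_ge (closure_minimal hSy isClosed_Iic hx)
  | coe m =>
    have hS : S ⊆ Iic y ∪ Ici (m : X) := fun s hs =>
      (le_or_gt s y).imp id fun hys =>
        (WithTop.coe_le_coe.1 (hm ▸ hgap ⟨s, hs⟩ hys) : m ≤ ⟨s, hs⟩)
    rcases closure_minimal hS (isClosed_Iic.union isClosed_Ici) hx with hxy | hmx
    · exact hyx.not_ge hxy
    · exact (lt_of_leastAbove_eq_coe hm).not_ge hmx

theorem strictMonoOn_leastAbove : StrictMonoOn (leastAbove S) (closure S) := by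
  intro x hx x' hx' hxx'
  obtain ⟨s, hs, hxs, hsx'⟩ := exists_mem_Ioc_of_mem_closure hx' hxx'
  refine (leastAbove_le (s := ⟨s, hs⟩) hxs).trans_lt ?_
  cases hm : leastAbove S x' with
  | top => exact WithTop.coe_lt_top _
  | coe m => exact WithTop.coe_lt_coe.2 (hsx'.trans_lt (lt_of_leastAbove_eq_coe hm))

end LeastAbove

theorem closure_orderType {X : Type*} [LinearOrder X] [TopologicalSpace X]
    [OrderTopology X] (S : Set X) (α : Ordinal)
    (h : Nonempty (S ≃o Set.Iio α)) :
    ∃ β : Ordinal, (β = α ∨ β = α + 1) ∧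
      Nonempty ((closure S : Set X) ≃o Set.Iio β) := by
  obtain ⟨e⟩ := h
  have : WellFoundedLT S := e.toOrderEmbedding.wellFoundedLT
  exact exists_orderIso_Iio_of_orderEmbedding_withTop e
    (OrderEmbedding.ofStrictMono (inclusion subset_closure) fun _ _ hlt => hlt)
    (OrderEmbedding.ofStrictMono (fun x : closure S => leastAbove S x)
      fun x y hlt => strictMonoOn_leastAbove x.2 y.2 hlt)
end

section
/- Let X be a totally ordered set with the least upper bound property and let S ⊆ X be well-ordered and discrete (containing none of its limit points). Then for any ordinal α less than the order type of S, the α-th element of S equals the (α+1)-st element (in 0-indexing) of the closure of S, i.e., S[α] = S̄[-1+(α+1)]. -/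
/-!
Write `S[α]` for `e.symm α`; by induction on `α` we show that `S[α]` has index `-1 + (α + 1)` in
`closure S`. An element of `closure S` with index `γ` is pinned down by knowing that exactly the
elements of index `< γ` lie below it. At a successor, no point of `S`, hence none of its closure,
lies strictly between `S[β]` and `S[β + 1]`, so the index goes up by one. At a limit `α`, the
supremum `p` of the `S[β]`, `β < α`, lies in the closure and has index `α`, since the index of
`S[β]` is squeezed between `β` and `β + 1`. Discreteness gives `p < S[α]`, and again nothing of
`S` lies in between, so `S[α]` has index `α + 1`.
-/

open Order Ordinal Set

theorem Ordinal.one_add_le_add_one (γ : Ordinal) : 1 + γ ≤ γ + 1 := by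
  rcases lt_or_ge γ ω with h | h
  · obtain ⟨n, rfl⟩ := lt_omega0.1 h
    rw [← Nat.cast_one, ← Nat.cast_add, ← Nat.cast_add, Nat.add_comm]
  · rw [one_add_of_omega0_le h]
    exact le_self_add

theorem Ordinal.le_of_one_add_eq_add_one {β γ : Ordinal} (h : 1 + γ = β + 1) : β ≤ γ :=
  lt_add_one_iff.1 <| (lt_add_one β).trans_le <| h.symm.trans_le (one_add_le_add_one γ)

theorem OrderIso.val_apply_eq_of_forall_lt_iff {C : Type*} [Preorder C] {σ : Ordinal}
    (f : C ≃o Iio σ) {c : C} {α : Ordinal} (h : ∀ d, d < c ↔ (f d : Ordinal) < α) :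
    (f c : Ordinal) = α := by
  refine le_antisymm (not_lt.1 fun hαc => ?_) (not_lt.1 fun hcα => lt_irrefl c ((h c).2 hcα))
  set d := f.symm ⟨α, hαc.trans (f c).2⟩
  have hfd : (f d : Ordinal) = α := by rw [f.apply_symm_apply]
  refine ((h d).1 ?_).ne hfd
  rwa [← f.lt_iff_lt, ← Subtype.coe_lt_coe, hfd]

section ClosureIndex

variable {X : Type*} [LinearOrder X] [TopologicalSpace X] [OrderClosedTopology X] {S : Set X}

theorem lt_iff_le_of_disjoint_Ioo {x y d : X} (hxy : x < y) (hS : Disjoint S (Ioo x y))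
    (hd : d ∈ closure S) : d < y ↔ d ≤ x := by
  refine ⟨fun hdy => not_lt.1 fun hxd => ?_, fun hdx => hdx.trans_lt hxy⟩
  obtain ⟨s, hs, hsxy⟩ := (closure_inter_open_nonempty_iff isOpen_Ioo).1 ⟨d, hd, hxd, hdy⟩
  exact hS.ne_of_mem hs hsxy rfl

theorem val_apply_eq_zero_of_mem_lowerBounds {σ : Ordinal} (f : closure S ≃o Iio σ)
    {x : closure S} (hx : (x : X) ∈ lowerBounds S) : (f x : Ordinal) = 0 :=
  f.val_apply_eq_of_forall_lt_iff fun d =>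
    iff_of_false (not_lt.2 (closure_minimal hx isClosed_Ici d.2)) zero_le.not_gt

theorem val_apply_eq_add_one_of_disjoint_Ioo {σ : Ordinal} (f : closure S ≃o Iio σ)
    {x y : closure S} (hxy : (x : X) < y) (hS : Disjoint S (Ioo (x : X) y)) :
    (f y : Ordinal) = f x + 1 :=
  f.val_apply_eq_of_forall_lt_iff fun d => by
    rw [Order.lt_add_one_iff, Subtype.coe_le_coe, f.le_iff_le, ← Subtype.coe_le_coe,
      ← lt_iff_le_of_disjoint_Ioo hxy hS d.2, Subtype.coe_lt_coe]

end ClosureIndex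

theorem exists_isLUB_Iio_lt_of_notMem_closure {X : Type*} [ConditionallyCompleteLinearOrder X]
    [TopologicalSpace X] [OrderTopology X] {S : Set X} {s : X}
    (hs : s ∉ closure (S \ {s})) (hne : (S ∩ Iio s).Nonempty) :
    ∃ p ∈ closure S, p < s ∧ IsLUB (S ∩ Iio s) p := by
  have hlub : IsLUB (S ∩ Iio s) (sSup (S ∩ Iio s)) := isLUB_csSup hne ⟨s, fun _ h => h.2.le⟩
  have hcl := hlub.mem_closure hne
  refine ⟨_, closure_mono inter_subset_left hcl, (hlub.2 fun _ h => h.2.le).lt_of_ne ?_, hlub⟩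
  have hsub : S ∩ Iio s ⊆ S \ {s} := fun t ht => ⟨ht.1, ht.2.ne⟩
  intro hps
  have hsS := closure_mono hsub hcl
  rw [hps] at hsS
  exact hs hsS

section WellOrderedDiscrete

variable {X : Type*} [ConditionallyCompleteLinearOrder X] [TopologicalSpace X] [OrderTopology X]
  {S : Set X} {τ σ : Ordinal} (e : S ≃o Iio τ) (f : closure S ≃o Iio σ)

theorem one_add_apply_inclusion_of_isSuccLimit (hdisc : ∀ x ∈ S, x ∉ closure (S \ {x}))
    {s : S} (hlim : IsSuccLimit (e s : Ordinal))
    (ih : ∀ t < s, 1 + (f (inclusion subset_closure t) : Ordinal) = e t + 1) :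
    1 + (f (inclusion subset_closure s) : Ordinal) = e s + 1 := by
  have hne : (S ∩ Iio (s : X)).Nonempty := by
    refine ⟨e.symm ⟨0, hlim.pos.trans (e s).2⟩, Subtype.prop _, ?_⟩
    exact Subtype.coe_lt_coe.2 (e.symm_apply_lt.2 hlim.pos)
  obtain ⟨p, hpS, hps, hlub⟩ := exists_isLUB_Iio_lt_of_notMem_closure (hdisc s s.2) hne
  have hfp : (f ⟨p, hpS⟩ : Ordinal) = e s := f.val_apply_eq_of_forall_lt_iff fun d => by
    constructor
    · intro hdp
      obtain ⟨t, ⟨htS, hts⟩, hdt⟩ := (lt_isLUB_iff hlub).1 hdp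
      have ht : (⟨t, htS⟩ : S) < s := hts
      calc (f d : Ordinal) < f (inclusion subset_closure ⟨t, htS⟩) := f.strictMono hdt
        _ ≤ 1 + f (inclusion subset_closure ⟨t, htS⟩) := le_add_self
        _ = e ⟨t, htS⟩ + 1 := ih _ ht
        _ < e s := hlim.add_one_lt (e.strictMono ht)
    · intro hds
      set β := (f d : Ordinal)
      have hβ : β + 1 < e s := hlim.add_one_lt hds
      set t := e.symm ⟨β, hds.trans (e s).2⟩
      set u := e.symm ⟨β + 1, hβ.trans (e s).2⟩
      have hdt : d ≤ inclusion subset_closure t := by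
        rw [← f.le_iff_le, ← Subtype.coe_le_coe]
        refine le_of_one_add_eq_add_one ?_
        rw [ih t (e.symm_apply_lt.2 hds), e.apply_symm_apply]
      have htu : t < u := e.symm.strictMono (Subtype.coe_lt_coe.1 (lt_add_one β))
      calc (d : X) ≤ t := Subtype.coe_le_coe.2 hdt
        _ < u := Subtype.coe_lt_coe.2 htu
        _ ≤ p := hlub.1 ⟨u.2, Subtype.coe_lt_coe.2 (e.symm_apply_lt.2 hβ)⟩
  have hdisj : Disjoint S (Ioo p s) :=
    disjoint_left.2 fun t ht hpt => hpt.1.not_ge (hlub.1 ⟨ht, hpt.2⟩)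
  rw [val_apply_eq_add_one_of_disjoint_Ioo f (x := ⟨p, hpS⟩) hps hdisj, hfp, ← add_assoc,
    one_add_of_omega0_le (omega0_le_of_isSuccLimit hlim)]

theorem one_add_apply_inclusion (hdisc : ∀ x ∈ S, x ∉ closure (S \ {x})) (s : S) :
    1 + (f (inclusion subset_closure s) : Ordinal) = e s + 1 := by
  have : WellFoundedLT S := e.strictMono.wellFoundedLT
  induction s using WellFoundedLT.induction with
  | ind s ih =>
  obtain hs | ⟨β, hs⟩ | hlim := zero_or_succ_or_isSuccLimit (e s : Ordinal)
  · have hmin : (s : X) ∈ lowerBounds S := fun t ht => by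
      have : e s ≤ e ⟨t, ht⟩ := Subtype.coe_le_coe.1 (by rw [hs]; exact zero_le)
      exact e.le_iff_le.1 this
    rw [val_apply_eq_zero_of_mem_lowerBounds f hmin, hs, add_zero, zero_add]
  · have hsτ : succ β < τ := by rw [hs]; exact (e s).2
    set t := e.symm ⟨β, (lt_succ β).trans hsτ⟩
    have hts : t < s := e.symm_apply_lt.2 (by rw [← Subtype.coe_lt_coe, ← hs]; exact lt_succ β)
    have hdisj : Disjoint S (Ioo (t : X) s) := disjoint_left.2 fun u hu ⟨htu, hus⟩ => by
      have h₁ : β < e ⟨u, hu⟩ := e.symm_apply_lt.1 (show t < ⟨u, hu⟩ from htu)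
      have h₂ : (e ⟨u, hu⟩ : Ordinal) < succ β := by
        rw [hs]
        exact e.strictMono (Subtype.coe_lt_coe.1 hus)
      exact (succ_le_of_lt h₁).not_gt h₂
    rw [val_apply_eq_add_one_of_disjoint_Ioo f (x := inclusion subset_closure t) hts hdisj,
      ← add_assoc, ih t hts, e.apply_symm_apply]
    exact congrArg (· + 1) ((succ_eq_add_one β).symm.trans hs)
  · exact one_add_apply_inclusion_of_isSuccLimit e f hdisc hlim ih

end WellOrderedDiscrete

theorem discrete_closure_index_shift {X : Type*}
    [ConditionallyCompleteLinearOrder X] [TopologicalSpace X] [OrderTopology X]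
    (S : Set X)
    (hdisc : ∀ x ∈ S, x ∉ closure (S \ {x}))
    (τ σ : Ordinal)
    (e : S ≃o Set.Iio τ) (f : (closure S : Set X) ≃o Set.Iio σ) :
    ∀ α : Ordinal, ∀ hα : α < τ, ∃ γ : Ordinal, 1 + γ = α + 1 ∧
      ∃ hγ : γ < σ, (↑(e.symm ⟨α, hα⟩) : X) = ↑(f.symm ⟨γ, hγ⟩) := by
  intro α hα
  set s := e.symm ⟨α, hα⟩
  refine ⟨f (inclusion subset_closure s), ?_, (f _).2, ?_⟩
  · rw [one_add_apply_inclusion e f hdisc s, e.apply_symm_apply]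
  · rw [Subtype.coe_eta, f.symm_apply_apply]
end
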